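/- For c<d, ρ>0, α∈(0,1), the auxiliary function h(t) = (α+2)(t^ρ−c^ρ)^{1+α} − 2(α+4)/(d^ρ−c^ρ) (t^ρ−c^ρ)^{2+α} + (α+10)/(d^ρ−c^ρ)² (t^ρ−c^ρ)^{3+α} − 4/(d^ρ−c^ρ)³ (t^ρ−c^ρ)^{4+α} on [c,d] is of class C¹ and satisfies h(c)=h(d)=0, h'(c)=h'(d)=0, and ^CD_{c+}^{α,ρ}h(c)=^CD_{c+}^{α,ρ}h(d)=0. -/

import Mathlib

open Real MeasureTheory intervalIntegral Set

/-- Caputo–Katugampola fractional derivative (C¹ integral form). -/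
noncomputable def CKderiv (a α ρ : ℝ) (x : ℝ → ℝ) (t : ℝ) : ℝ :=
  ρ ^ α / Real.Gamma (1 - α) * ∫ τ in a..t, (t ^ ρ - τ ^ ρ) ^ (-α) * deriv x τ

/-- Caputo–Katugampola fractional derivative (definition form with d/dt outside). -/
noncomputable def CKderivDef (a α ρ : ℝ) (x : ℝ → ℝ) (t : ℝ) : ℝ :=
  ρ ^ α / Real.Gamma (1 - α) * t ^ (1 - ρ) *
    deriv (fun s => ∫ τ in a..s, τ ^ (ρ - 1) * (s ^ ρ - τ ^ ρ) ^ (-α) * (x τ - x a)) t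

/-- Katugampola fractional integral of order β. -/
noncomputable def KatInt (a β ρ : ℝ) (f : ℝ → ℝ) (t : ℝ) : ℝ :=
  ρ ^ (1 - β) / Real.Gamma β * ∫ τ in a..t, τ ^ (ρ - 1) * (t ^ ρ - τ ^ ρ) ^ (β - 1) * f τ

/-- Right-sided fractional integral type operator I_{b-}^{1-α,ρ}. -/
noncomputable def IrightCK (b α ρ : ℝ) (f : ℝ → ℝ) (t : ℝ) : ℝ :=
  ρ ^ α / Real.Gamma (1 - α) * ∫ τ in t..b, (τ ^ ρ - t ^ ρ) ^ (-α) * f τ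

/-- Right-sided fractional differential type operator D_{b-}^{α,ρ}. -/
noncomputable def DrightCK (b α ρ : ℝ) (f : ℝ → ℝ) (t : ℝ) : ℝ :=
  ρ ^ α / Real.Gamma (1 - α) *
    deriv (fun s => ∫ τ in s..b, (τ ^ ρ - s ^ ρ) ^ (-α) * f τ) t

/-- The variational functional J. -/
noncomputable def Jfun (a b α ρ : ℝ) (L : ℝ → ℝ → ℝ → ℝ) (x : ℝ → ℝ) : ℝ :=
  ∫ t in a..b, L t (x t) (CKderiv a α ρ x t)

/-- Distance coming from the norm ‖x‖ = max|x| + max|^CD x|. -/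
noncomputable def CKdist (a b α ρ : ℝ) (x y : ℝ → ℝ) : ℝ :=
  sSup ((fun t => |x t - y t|) '' Set.Icc a b) +
  sSup ((fun t => |CKderiv a α ρ x t - CKderiv a α ρ y t|) '' Set.Icc a b)

/-- Admissible functions: C¹ with fixed boundary values. -/
def Admissible (a b xa xb : ℝ) (x : ℝ → ℝ) : Prop :=
  ContDiffOn ℝ 1 x (Set.Icc a b) ∧ x a = xa ∧ x b = xb

/-!
Write `v = t ^ ρ - c ^ ρ` and `U = d ^ ρ - c ^ ρ`. Then `h = P(v)` with `P(v) = v ^ (1 + α) q(v)`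
for a cubic `q` vanishing at `U`, and `P'(v) = v ^ α (U - v) s(v)` for a quadratic `s`. The same
substitution turns the Caputo–Katugampola derivative at `d` into the Caputo integral
`∫₀ᵁ (U - v) ^ (-α) P'(v) dv`. The factor `U - v` tames the singular kernel: the integrand becomes
`v ^ α (U - v) ^ (1 - α) s(v)`, which has the antiderivative `(U - v) ^ (1 - α) v ^ (1 + α) m(v)`
for a quadratic `m`, and this vanishes at both ends of `[0, U]`.
-/

namespace CaputoKatugampola

variable {α U v : ℝ}

lemma rpow_ofNat_add (hv : 0 ≤ v) (hα : 0 ≤ α) (n : ℕ) [n.AtLeastTwo] :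
    v ^ ((OfNat.ofNat n : ℝ) + α) = v ^ (OfNat.ofNat n : ℕ) * v ^ α := by
  rw [rpow_add' hv (add_pos_of_pos_of_nonneg Nat.ofNat_pos hα).ne', ← rpow_natCast]
  rfl

noncomputable def auxProfile (α U v : ℝ) : ℝ :=
  (α + 2) * v ^ (1 + α) - 2 * (α + 4) / U * v ^ (2 + α) +
    (α + 10) / U ^ 2 * v ^ (3 + α) - 4 / U ^ 3 * v ^ (4 + α)

noncomputable def auxProfileDeriv (α U v : ℝ) : ℝ :=
  (α + 2) * (1 + α) * v ^ α - 2 * (α + 4) * (2 + α) / U * v ^ (1 + α) +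
    (α + 10) * (3 + α) / U ^ 2 * v ^ (2 + α) - 4 * (4 + α) / U ^ 3 * v ^ (3 + α)

noncomputable def auxAntideriv (α U v : ℝ) : ℝ :=
  (U - v) ^ (1 - α) * v ^ (1 + α) *
    ((α + 2) / U - 2 * (α + 3) / U ^ 2 * v + (α + 4) / U ^ 3 * v ^ 2)

lemma auxProfile_zero (hα : -1 < α) : auxProfile α U 0 = 0 := by
  simp [auxProfile, zero_rpow, show (1 + α) ≠ 0 by linarith, show (2 + α) ≠ 0 by linarith,
    show (3 + α) ≠ 0 by linarith, show (4 + α) ≠ 0 by linarith]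

lemma auxProfile_self (hα : 0 ≤ α) (hU : 0 < U) : auxProfile α U U = 0 := by
  rw [auxProfile, rpow_one_add' hU.le (by positivity)]
  simp only [rpow_ofNat_add hU.le hα]
  field_simp
  ring

lemma auxProfileDeriv_zero (hα : 0 < α) : auxProfileDeriv α U 0 = 0 := by
  simp [auxProfileDeriv, zero_rpow, hα.ne', show (1 + α) ≠ 0 by linarith,
    show (2 + α) ≠ 0 by linarith, show (3 + α) ≠ 0 by linarith]

lemma auxProfileDeriv_eq (hα : 0 ≤ α) (hU : U ≠ 0) (hv : 0 ≤ v) :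
    auxProfileDeriv α U v = v ^ α * (U - v) *
      ((α + 2) * (α + 1) / U - (α + 2) * (α + 7) / U ^ 2 * v + 4 * (α + 4) / U ^ 3 * v ^ 2) := by
  rw [auxProfileDeriv, rpow_one_add' hv (by positivity)]
  simp only [rpow_ofNat_add hv hα]
  field_simp
  ring

lemma auxProfileDeriv_self (hα : 0 ≤ α) (hU : 0 < U) : auxProfileDeriv α U U = 0 := by
  rw [auxProfileDeriv_eq hα hU.ne' hU.le, sub_self, mul_zero, zero_mul]

lemma hasDerivAt_auxProfile (hα : 0 ≤ α) (v : ℝ) :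
    HasDerivAt (auxProfile α U) (auxProfileDeriv α U v) v := by
  have H (p : ℝ) (hp : 1 ≤ p) := hasDerivAt_rpow_const (x := v) (Or.inr hp)
  have := ((((H (1 + α) (by linarith)).const_mul (α + 2)).sub
    ((H (2 + α) (by linarith)).const_mul (2 * (α + 4) / U))).add
    ((H (3 + α) (by linarith)).const_mul ((α + 10) / U ^ 2))).sub
    ((H (4 + α) (by linarith)).const_mul (4 / U ^ 3))
  refine HasDerivAt.congr_deriv (f := auxProfile α U) this ?_
  rw [add_sub_cancel_left, show (2 : ℝ) + α - 1 = 1 + α by ring,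
    show (3 : ℝ) + α - 1 = 2 + α by ring, show (4 : ℝ) + α - 1 = 3 + α by ring, auxProfileDeriv]
  ring

lemma contDiff_auxProfile (hα : 0 ≤ α) : ContDiff ℝ 1 (auxProfile α U) := by
  have H (p : ℝ) (hp : 1 ≤ p) : ContDiff ℝ 1 fun v : ℝ ↦ v ^ p :=
    contDiff_rpow_const_of_le (by exact_mod_cast hp)
  exact (((contDiff_const.mul (H (1 + α) (by linarith))).sub
    (contDiff_const.mul (H (2 + α) (by linarith)))).add
    (contDiff_const.mul (H (3 + α) (by linarith)))).sub
    (contDiff_const.mul (H (4 + α) (by linarith)))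

lemma rpow_neg_mul_auxProfileDeriv (hα0 : 0 ≤ α) (hα1 : α < 1) (hU : 0 < U) (hv : v ∈ Icc 0 U) :
    (U - v) ^ (-α) * auxProfileDeriv α U v = v ^ α * (U - v) ^ (1 - α) *
      ((α + 2) * (α + 1) / U - (α + 2) * (α + 7) / U ^ 2 * v + 4 * (α + 4) / U ^ 3 * v ^ 2) := by
  have hUv : 0 ≤ U - v := sub_nonneg.2 hv.2
  rw [auxProfileDeriv_eq hα0 hU.ne' hv.1, show 1 - α = -α + 1 by ring,
    rpow_add' hUv (by linarith), rpow_one]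
  ring

lemma hasDerivAt_auxAntideriv (hU : 0 < U) (hv : v ∈ Ioo 0 U) :
    HasDerivAt (auxAntideriv α U) (v ^ α * (U - v) ^ (1 - α) *
      ((α + 2) * (α + 1) / U - (α + 2) * (α + 7) / U ^ 2 * v + 4 * (α + 4) / U ^ 3 * v ^ 2)) v := by
  have hUv : 0 < U - v := sub_pos.2 hv.2
  have hw : HasDerivAt (fun w ↦ (U - w) ^ (1 - α)) ((1 - α) * (U - v) ^ (1 - α - 1) * -1) v :=
    (hasDerivAt_rpow_const (Or.inl hUv.ne')).comp v ((hasDerivAt_id v).const_sub U)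
  have hq : HasDerivAt (fun w ↦ (α + 2) / U - 2 * (α + 3) / U ^ 2 * w + (α + 4) / U ^ 3 * w ^ 2)
      (2 * (α + 4) / U ^ 3 * v - 2 * (α + 3) / U ^ 2) v :=
    ((((hasDerivAt_id' v).const_mul (2 * (α + 3) / U ^ 2)).const_sub ((α + 2) / U)).add
      (((hasDerivAt_id' v).pow 2).const_mul ((α + 4) / U ^ 3))).congr_deriv (by norm_num; ring)
  refine ((hw.mul (hasDerivAt_rpow_const (p := 1 + α) (Or.inl hv.1.ne'))).mul hq).congr_deriv ?_
  rw [Pi.mul_apply, rpow_sub_one hUv.ne', add_sub_cancel_left, rpow_add hv.1, rpow_one]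
  field_simp
  ring

lemma integral_rpow_neg_mul_auxProfileDeriv (hα0 : 0 ≤ α) (hα1 : α < 1) (hU : 0 < U) :
    ∫ v in 0..U, (U - v) ^ (-α) * auxProfileDeriv α U v = 0 := by
  rw [integral_congr fun v hv ↦
      rpow_neg_mul_auxProfileDeriv hα0 hα1 hU (by rwa [uIcc_of_le hU.le] at hv),
    integral_eq_sub_of_hasDerivAt_of_le hU.le ?cont (fun v hv ↦ hasDerivAt_auxAntideriv hU hv)
      ?int]
  case cont =>
    exact Continuous.continuousOn (by unfold auxAntideriv; fun_prop (disch := linarith))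
  case int =>
    exact Continuous.intervalIntegrable (by fun_prop (disch := linarith)) _ _
  simp [auxAntideriv, zero_rpow, show 1 + α ≠ 0 by linarith, show 1 - α ≠ 0 by linarith]

lemma hasDerivAt_comp_rpow_sub_rpow {φ : ℝ → ℝ} {φ' c ρ t : ℝ} (ht : 0 < t)
    (hφ : HasDerivAt φ φ' (t ^ ρ - c ^ ρ)) :
    HasDerivAt (fun s ↦ φ (s ^ ρ - c ^ ρ)) (φ' * (ρ * t ^ (ρ - 1))) t :=
  hφ.comp t ((hasDerivAt_rpow_const (Or.inl ht.ne')).sub_const _)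

lemma CKderiv_comp_rpow_sub_rpow {φ φ' : ℝ → ℝ} {c t α ρ : ℝ} (hc : 0 < c) (hct : c ≤ t)
    (hρ : 0 < ρ) (hφ : ∀ v ∈ Icc 0 (t ^ ρ - c ^ ρ), HasDerivAt φ (φ' v) v) :
    CKderiv c α ρ (fun s ↦ φ (s ^ ρ - c ^ ρ)) t =
      ρ ^ α / Gamma (1 - α) * ∫ v in 0..t ^ ρ - c ^ ρ, (t ^ ρ - c ^ ρ - v) ^ (-α) * φ' v := by
  have hpos : ∀ s ∈ Icc c t, 0 < s := fun s hs ↦ hc.trans_le hs.1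
  have hmem : ∀ s ∈ Icc c t, s ^ ρ - c ^ ρ ∈ Icc 0 (t ^ ρ - c ^ ρ) := fun s hs ↦
    ⟨sub_nonneg.2 (rpow_le_rpow hc.le hs.1 hρ.le),
      sub_le_sub_right (rpow_le_rpow (hpos s hs).le hs.2 hρ.le) _⟩
  have hsubst := integral_comp_mul_deriv_of_deriv_nonneg (a := c) (b := t)
    (f := fun s ↦ s ^ ρ - c ^ ρ) (f' := fun s ↦ ρ * s ^ (ρ - 1))
    (g := fun v ↦ (t ^ ρ - c ^ ρ - v) ^ (-α) * φ' v) ?cont ?deriv ?nonneg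
  case cont =>
    rw [uIcc_of_le hct]
    exact fun s hs ↦ ((continuousAt_rpow_const _ _ (Or.inl (hpos s hs).ne')).sub
      continuousAt_const).continuousWithinAt
  case deriv =>
    rw [min_eq_left hct, max_eq_right hct]
    exact fun s hs ↦
      (hasDerivAt_rpow_const (Or.inl (hpos s (Ioo_subset_Icc_self hs)).ne')).sub_const _
  case nonneg =>
    rw [min_eq_left hct, max_eq_right hct]
    exact fun s hs ↦ by have := hpos s (Ioo_subset_Icc_self hs); positivity
  rw [sub_self] at hsubst
  rw [CKderiv, ← hsubst]
  congr 1
  refine integral_congr fun τ hτ ↦ ?_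
  rw [uIcc_of_le hct] at hτ
  rw [(hasDerivAt_comp_rpow_sub_rpow (hpos τ hτ) (hφ _ (hmem τ hτ))).deriv,
    Function.comp_apply, sub_sub_sub_cancel_right, mul_assoc]

end CaputoKatugampola

open CaputoKatugampola in
theorem stmt13 (c d α ρ : ℝ) (hc : 0 < c) (hcd : c < d) (hα : α ∈ Set.Ioo (0:ℝ) 1)
    (hρ : 0 < ρ) (h : ℝ → ℝ)
    (hh : ∀ t, h t =
      (α + 2) * (t ^ ρ - c ^ ρ) ^ (1 + α) -
      2 * (α + 4) / (d ^ ρ - c ^ ρ) * (t ^ ρ - c ^ ρ) ^ (2 + α) +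
      (α + 10) / (d ^ ρ - c ^ ρ) ^ (2:ℕ) * (t ^ ρ - c ^ ρ) ^ (3 + α) -
      4 / (d ^ ρ - c ^ ρ) ^ (3:ℕ) * (t ^ ρ - c ^ ρ) ^ (4 + α)) :
    ContDiffOn ℝ 1 h (Set.Icc c d) ∧
    h c = 0 ∧ h d = 0 ∧ deriv h c = 0 ∧ deriv h d = 0 ∧
    CKderiv c α ρ h c = 0 ∧ CKderiv c α ρ h d = 0 := by
  obtain ⟨hα0, hα1⟩ := hα
  have hU : 0 < d ^ ρ - c ^ ρ := sub_pos.2 (rpow_lt_rpow hc.le hcd hρ)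
  obtain rfl : h = fun t ↦ auxProfile α (d ^ ρ - c ^ ρ) (t ^ ρ - c ^ ρ) := funext hh
  have hderiv {t : ℝ} (ht : 0 < t) :
      deriv (fun s ↦ auxProfile α (d ^ ρ - c ^ ρ) (s ^ ρ - c ^ ρ)) t =
        auxProfileDeriv α (d ^ ρ - c ^ ρ) (t ^ ρ - c ^ ρ) * (ρ * t ^ (ρ - 1)) :=
    (hasDerivAt_comp_rpow_sub_rpow ht (hasDerivAt_auxProfile hα0.le _)).deriv
  refine ⟨?_, ?_, auxProfile_self hα0.le hU, ?_, ?_, ?_, ?_⟩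
  · exact (contDiff_auxProfile hα0.le).comp_contDiffOn fun t ht ↦
      ((contDiffAt_rpow_const_of_ne (hc.trans_le ht.1).ne').sub contDiffAt_const).contDiffWithinAt
  · simpa only [sub_self] using auxProfile_zero (by linarith)
  · rw [hderiv hc, sub_self, auxProfileDeriv_zero hα0, zero_mul]
  · rw [hderiv (hc.trans hcd), auxProfileDeriv_self hα0.le hU, zero_mul]
  · rw [CKderiv, integral_same, mul_zero]
  · rw [CKderiv_comp_rpow_sub_rpow hc hcd.le hρ fun v _ ↦ hasDerivAt_auxProfile hα0.le v,
      integral_rpow_neg_mul_auxProfileDeriv hα0.le hα1 hU, mul_zero]
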